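/- arXiv:2409.12502 — 2 statements merged into one kernel-verified Lean document; each statement's English description precedes it below -/
import Mathlib

section
/- Let ℓ : [0,1] → [0,1] be continuous and convex with ℓ(0) = 0 and ℓ(1) = 1, and let m > 0. Define q : [0,1) → ℝ₊ by q(0) := 0 and q(p) := ∂₋ℓ(p) (the left derivative of ℓ at p) for p ∈ (0,1), and let μ be the pushforward of Lebesgue measure on [0,1) under the map p ↦ m · q(p). Then μ ∈ 𝐌, m_μ = m, and L_μ(p) = ℓ(p) for all p ∈ [0,1]. Consequently the map μ ↦ (L_μ, m_μ) is a bijection from 𝐌 onto 𝔏 × (0,∞), where 𝔏 is the set of continuous convex functions [0,1] → [0,1] sending 0 to 0 and 1 to 1. -/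
open MeasureTheory Filter Topology

noncomputable section

/-- The mean of a measure on `ℝ`. -/
def mMean (μ : Measure ℝ) : ℝ := ∫ x, x ∂μ

/-- `μ ∈ 𝐌`: a Borel probability measure on `ℝ₊` (modelled as a measure on `ℝ` giving no
mass to negative numbers) with finite nonzero mean. -/
def MemM (μ : Measure ℝ) : Prop :=
  IsProbabilityMeasure μ ∧ μ {x | x < 0} = 0 ∧ Integrable id μ ∧ 0 < mMean μ

/-- The cumulative distribution function `F_μ(x) = μ([0,x])`. -/
def cdfR (μ : Measure ℝ) (x : ℝ) : ℝ := (μ (Set.Icc 0 x)).toReal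

/-- The quantile function `Q_μ(p) = inf {x ∈ ℝ₊ : F_μ(x) ≥ p}`. -/
def quant (μ : Measure ℝ) (p : ℝ) : ℝ := sInf {x : ℝ | 0 ≤ x ∧ p ≤ cdfR μ x}

/-- The Lorenz function `L_μ(p) = (∫_0^p Q_μ(t) dt) / m_μ`. -/
def lorenz (μ : Measure ℝ) (p : ℝ) : ℝ := (∫ t in (0:ℝ)..p, quant μ t) / mMean μ

/-- The pseudo-Lorenz function `Λ_μ(p) = (∫_{[0,Q_μ(p)]} u dμ(u)) / m_μ` for `p ∈ [0,1)`,
with `Λ_μ(1) = 1`. -/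
def pseudoLorenz (μ : Measure ℝ) (p : ℝ) : ℝ :=
  if p = 1 then 1 else (∫ u in Set.Icc (0:ℝ) (quant μ p), u ∂μ) / mMean μ

/-- The Gini coefficient `G(μ) = (∫∫ |x-y| d(μ⊗μ)) / (2 m_μ)`. -/
def gini (μ : Measure ℝ) : ℝ := (∫ z : ℝ × ℝ, |z.1 - z.2| ∂(μ.prod μ)) / (2 * mMean μ)

/-- The Hoover coefficient `H(μ) = (∫ |x - m_μ| dμ) / (2 m_μ)`. -/
def hoover (μ : Measure ℝ) : ℝ := (∫ x, |x - mMean μ| ∂μ) / (2 * mMean μ)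

/-- The Wasserstein-1 distance `W₁(μ,ν) = ∫_0^1 |Q_μ - Q_ν|`. -/
def W1 (μ ν : Measure ℝ) : ℝ := ∫ t in (0:ℝ)..1, |quant μ t - quant ν t|

/-- Weak convergence of a sequence of measures: convergence of integrals of all bounded
continuous functions. -/
def WeakCv (μs : ℕ → Measure ℝ) (ν : Measure ℝ) : Prop :=
  ∀ f : ℝ → ℝ, Continuous f → (∃ C : ℝ, ∀ x, |f x| ≤ C) →
    Tendsto (fun n => ∫ x, f x ∂(μs n)) atTop (𝓝 (∫ x, f x ∂ν))

/-- Uniform integrability of a family of measures on `ℝ₊`: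
`sup_i ∫_{(α,∞)} x dμ_i(x) → 0` as `α → +∞`. -/
def UnifInt {ι : Type*} (μs : ι → Measure ℝ) : Prop :=
  ∀ ε > (0:ℝ), ∃ A : ℝ, ∀ α ≥ A, ∀ i, (∫ x in Set.Ioi α, x ∂(μs i)) ≤ ε

end

/-- The left derivative of `ℓ`, set to `0` at `0`. -/
noncomputable def qOf (ℓ : ℝ → ℝ) (p : ℝ) : ℝ :=
  if p = 0 then 0 else derivWithin ℓ (Set.Iio p) p

/-- The pushforward of Lebesgue measure on `[0,1)` by `p ↦ m · ∂₋ℓ(p)`. -/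
noncomputable def muOf (ℓ : ℝ → ℝ) (m : ℝ) : Measure ℝ :=
  Measure.map (fun p => m * qOf ℓ p) (volume.restrict (Set.Ico (0:ℝ) 1))

/-!
The left derivative `q` of a convex `ℓ` is monotone, hence continuous off a countable set, and at
its continuity points `ℓ` is differentiable with derivative `q`. As `ℓ` is monotone, `ℓ'` is
integrable, so `∫₀ᵖ q = ℓ p - ℓ 0`. Pushing Lebesgue measure on `[0,1)` forward by a monotone
nonnegative map `f` gives a measure whose quantile function equals `f` wherever `f` is left
continuous; hence `Q_μ = m q` almost everywhere and `L_μ = ℓ`.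

Conversely, every `μ ∈ 𝐌` is the pushforward of Lebesgue measure on `(0,1)` by `Q_μ`. The Lorenz
function and the mean determine `∫₀ᵖ Q_μ` for every `p`, and two monotone functions with equal
integrals over all subintervals agree at their common continuity points, so `Q_μ` and with it `μ`
are determined.
-/

open Set ProbabilityTheory

namespace ConvexOn

variable {S : Set ℝ} {f : ℝ → ℝ} {x : ℝ}

theorem hasDerivAt_leftDeriv_of_continuousAt (hfc : ConvexOn ℝ S f) (hx : x ∈ interior S)
    (hc : ContinuousAt (fun y ↦ derivWithin f (Iio y) y) x) :
    HasDerivAt f (derivWithin f (Iio x) x) x := by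
  have hright : derivWithin f (Ioi x) x = derivWithin f (Iio x) x := by
    refine le_antisymm ?_ (hfc.leftDeriv_le_rightDeriv_of_mem_interior hx)
    refine ge_of_tendsto (hc.tendsto.mono_left (nhdsWithin_le_nhds (s := Ioi x))) ?_
    filter_upwards [inter_mem_nhdsWithin (Ioi x) (isOpen_interior.mem_nhds hx),
      self_mem_nhdsWithin] with y ⟨_, hy⟩ hxy
    exact (hfc.rightDeriv_le_slope_of_mem_interior hx (interior_subset hy) hxy).trans
      (hfc.slope_le_leftDeriv_of_mem_interior (interior_subset hx) hy hxy)
  rw [hasDerivAt_iff_tendsto_slope_left_right]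
  refine ⟨?_, hright ▸ ?_⟩
  · exact (hasDerivWithinAt_iff_tendsto_slope' self_notMem_Iio).mp
      (hfc.hasDerivWithinAt_leftDeriv_of_mem_interior hx)
  · exact (hasDerivWithinAt_iff_tendsto_slope' self_notMem_Ioi).mp
      (hfc.hasDerivWithinAt_rightDeriv_of_mem_interior hx)

theorem monotoneOn_Icc_of_isMinOn_left {a b : ℝ} (hfc : ConvexOn ℝ (Icc a b) f)
    (hmin : IsMinOn f (Icc a b) a) : MonotoneOn f (Icc a b) := by
  intro x hx y hy hxy
  rcases hx.1.eq_or_lt with rfl | hax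
  · exact hmin hy
  rcases hxy.eq_or_lt with rfl | hxy
  · rfl
  have hslope := hfc.slope_mono_adjacent (left_mem_Icc.2 (hx.1.trans hx.2)) hy hax hxy
  have hxa : 0 ≤ (f x - f a) / (x - a) :=
    div_nonneg (sub_nonneg.2 (hmin hx)) (sub_nonneg.2 hax.le)
  have := (le_div_iff₀ (sub_pos.2 hxy)).1 (hxa.trans hslope)
  linarith

end ConvexOn

section LeftDerivative

variable {ℓ : ℝ → ℝ}

lemma qOf_eq_leftDeriv {p : ℝ} (hp : p ≠ 0) : qOf ℓ p = derivWithin ℓ (Iio p) p := if_neg hp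

variable (hconv : ConvexOn ℝ (Icc 0 1) ℓ)
include hconv

lemma hasDerivAt_qOf {x : ℝ} (hx : x ∈ Ioo (0:ℝ) 1) (hc : ContinuousAt (qOf ℓ) x) :
    HasDerivAt ℓ (qOf ℓ x) x := by
  rw [qOf_eq_leftDeriv hx.1.ne']
  refine hconv.hasDerivAt_leftDeriv_of_continuousAt (by rwa [interior_Icc]) (hc.congr ?_)
  filter_upwards [eventually_ne_nhds hx.1.ne'] with y hy using qOf_eq_leftDeriv hy

variable (hmin : IsMinOn ℓ (Icc 0 1) 0)
include hmin

lemma qOf_nonneg {p : ℝ} (hp : p ∈ Ico (0:ℝ) 1) : 0 ≤ qOf ℓ p := by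
  rcases hp.1.eq_or_lt with rfl | hp0
  · simp [qOf]
  rw [qOf_eq_leftDeriv hp0.ne']
  refine le_trans ?_ (hconv.slope_le_leftDeriv_of_mem_interior (left_mem_Icc.2 zero_le_one)
    (by rw [interior_Icc]; exact ⟨hp0, hp.2⟩) hp0)
  rw [slope_def_field]
  exact div_nonneg (sub_nonneg.2 (hmin ⟨hp0.le, hp.2.le⟩)) (by linarith)

lemma monotoneOn_qOf : MonotoneOn (qOf ℓ) (Ico 0 1) := by
  intro s hs t ht hst
  rcases hs.1.eq_or_lt with rfl | hs0
  · simpa [qOf] using qOf_nonneg hconv hmin ht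
  have hint := interior_Icc (a := (0:ℝ)) (b := 1)
  rw [qOf_eq_leftDeriv hs0.ne', qOf_eq_leftDeriv (hs0.trans_le hst).ne']
  exact hconv.monotoneOn_leftDeriv (hint ▸ ⟨hs0, hs.2⟩) (hint ▸ ⟨hs0.trans_le hst, ht.2⟩) hst

lemma countable_not_continuousAt_qOf :
    {x ∈ Ioo (0:ℝ) 1 | ¬ContinuousAt (qOf ℓ) x}.Countable := by
  refine ((monotoneOn_qOf hconv hmin).mono Ioo_subset_Ico_self)
    |>.countable_not_continuousWithinAt.mono ?_
  rintro x ⟨hx, hc⟩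
  exact ⟨hx, fun h ↦ hc (h.continuousAt (Ioo_mem_nhds hx.1 hx.2))⟩

lemma intervalIntegrable_qOf : IntervalIntegrable (qOf ℓ) volume 0 1 := by
  have hmono := hconv.monotoneOn_Icc_of_isMinOn_left hmin
  rw [← uIcc_of_le zero_le_one] at hmono
  refine hmono.intervalIntegrable_deriv.congr_ae ?_
  have hE := (countable_not_continuousAt_qOf hconv hmin).union (countable_singleton 1)
  filter_upwards [ae_restrict_mem measurableSet_uIoc, ae_restrict_of_ae (hE.ae_notMem volume)]
    with x hx hxE
  rw [uIoc_of_le zero_le_one] at hx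
  have hx' : x ∈ Ioo (0:ℝ) 1 := ⟨hx.1, hx.2.lt_of_ne fun h ↦ hxE (Or.inr h)⟩
  exact (hasDerivAt_qOf hconv hx' (not_not.1 fun h ↦ hxE (Or.inl ⟨hx', h⟩))).deriv

lemma integral_qOf (hcont : ContinuousOn ℓ (Icc 0 1)) {a b : ℝ} (ha : 0 ≤ a) (hab : a ≤ b)
    (hb : b ≤ 1) : ∫ x in a..b, qOf ℓ x = ℓ b - ℓ a := by
  refine integral_eq_of_hasDerivAt_off_countable_of_le ℓ (qOf ℓ) hab
    (countable_not_continuousAt_qOf hconv hmin) (hcont.mono (Icc_subset_Icc ha hb)) ?_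
    ((intervalIntegrable_qOf hconv hmin).mono_set ?_)
  · rintro x ⟨hx, hc⟩
    have hx' : x ∈ Ioo (0:ℝ) 1 := ⟨ha.trans_lt hx.1, hx.2.trans_le hb⟩
    exact hasDerivAt_qOf hconv hx' (not_not.1 fun h ↦ hc ⟨hx', h⟩)
  · rw [uIcc_of_le hab, uIcc_of_le zero_le_one]
    exact Icc_subset_Icc ha hb

end LeftDerivative

section Pushforward

variable {f : ℝ → ℝ} (hf : MonotoneOn f (Ico 0 1))
include hf

lemma map_restrict_Ico_apply {s : Set ℝ} (hs : MeasurableSet s) :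
    (volume.restrict (Ico (0:ℝ) 1)).map f s = volume (f ⁻¹' s ∩ Ico 0 1) := by
  rw [Measure.map_apply_of_aemeasurable
    (aemeasurable_restrict_of_monotoneOn measurableSet_Ico hf) hs,
    Measure.restrict_apply' measurableSet_Ico]

lemma isProbabilityMeasure_map_restrict_Ico :
    IsProbabilityMeasure ((volume.restrict (Ico (0:ℝ) 1)).map f) :=
  ⟨by simp [map_restrict_Ico_apply hf MeasurableSet.univ]⟩

variable (hf0 : ∀ x ∈ Ico (0:ℝ) 1, 0 ≤ f x)
include hf0

lemma map_restrict_Ico_Iio_zero : (volume.restrict (Ico (0:ℝ) 1)).map f (Iio 0) = 0 := by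
  rw [map_restrict_Ico_apply hf measurableSet_Iio]
  convert measure_empty (μ := (volume : Measure ℝ))
  exact eq_empty_of_forall_notMem fun x hx ↦ (hf0 x hx.2).not_gt hx.1

lemma quant_map_restrict_Ico {t : ℝ} (ht : t ∈ Ioo (0:ℝ) 1)
    (hft : ContinuousWithinAt f (Iio t) t) :
    quant ((volume.restrict (Ico (0:ℝ) 1)).map f) t = f t := by
  set ν := (volume.restrict (Ico (0:ℝ) 1)).map f
  have hcdf (x : ℝ) : cdfR ν x = (volume (f ⁻¹' Icc 0 x ∩ Ico 0 1)).toReal := by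
    rw [cdfR, map_restrict_Ico_apply hf measurableSet_Icc]
  have hfin (x : ℝ) : volume (f ⁻¹' Icc 0 x ∩ Ico 0 1) ≠ ⊤ :=
    ((measure_mono inter_subset_right).trans_lt (by simp)).ne
  have hmem : 0 ≤ f t ∧ t ≤ cdfR ν (f t) := by
    refine ⟨hf0 t ⟨ht.1.le, ht.2⟩, ?_⟩
    have hsub : Ico 0 t ⊆ f ⁻¹' Icc 0 (f t) ∩ Ico 0 1 := fun p hp ↦
      ⟨⟨hf0 p ⟨hp.1, hp.2.trans ht.2⟩, hf ⟨hp.1, hp.2.trans ht.2⟩ ⟨ht.1.le, ht.2⟩ hp.2.le⟩,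
        ⟨hp.1, hp.2.trans ht.2⟩⟩
    rw [hcdf, ← ENNReal.ofReal_le_iff_le_toReal (hfin _)]
    simpa using measure_mono (μ := volume) hsub
  refine le_antisymm (csInf_le ⟨0, fun _ hx ↦ hx.1⟩ hmem) (le_csInf ⟨_, hmem⟩ ?_)
  rintro x ⟨-, hx⟩
  by_contra! hxt
  obtain ⟨s, hxs, hs⟩ := ((hft.eventually (lt_mem_nhds hxt)).and (Ioo_mem_nhdsLT ht.1)).exists
  have hsub : f ⁻¹' Icc 0 x ∩ Ico 0 1 ⊆ Ico 0 s := by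
    rintro p ⟨hp, hp01⟩
    refine ⟨hp01.1, lt_of_not_ge fun hsp ↦ ?_⟩
    exact (hxs.trans_le (hf ⟨hs.1.le, hs.2.trans ht.2⟩ hp01 hsp)).not_ge hp.2
  have : cdfR ν x ≤ s := by
    rw [hcdf, ← ENNReal.toReal_ofReal hs.1.le]
    refine ENNReal.toReal_mono (by simp) ((measure_mono hsub).trans ?_)
    simp
  linarith [hs.2]

end Pushforward

lemma volume_Ioo_inter_Iic {c : ℝ} (hc1 : c ≤ 1) :
    volume (Ioo 0 1 ∩ Iic c) = ENNReal.ofReal c := by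
  refine le_antisymm ?_ ?_
  · calc volume (Ioo 0 1 ∩ Iic c) ≤ volume (Ioc 0 c) := measure_mono fun x hx ↦ ⟨hx.1.1, hx.2⟩
      _ = ENNReal.ofReal c := by simp
  · calc ENNReal.ofReal c = volume (Ioo 0 c) := by simp
      _ ≤ volume (Ioo 0 1 ∩ Iic c) :=
        measure_mono fun x hx ↦ ⟨⟨hx.1, hx.2.trans_le hc1⟩, hx.2.le⟩

section Quantile

variable {μ : Measure ℝ}

lemma exists_lt_cdf {t : ℝ} (ht : t < 1) : ∃ x, 0 ≤ x ∧ t < cdf μ x :=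
  (((tendsto_cdf_atTop μ).eventually (lt_mem_nhds ht)).and (eventually_ge_atTop 0)).exists.imp
    fun _ h ↦ ⟨h.2, h.1⟩

variable [IsProbabilityMeasure μ]

lemma cdfR_eq_cdf (hμ : μ (Iio 0) = 0) : cdfR μ = cdf μ := by
  ext x
  rw [cdfR, cdf_eq_real, measureReal_def, ← measure_sdiff_null (s := Iic x) hμ]
  congr 2
  ext y
  simp only [mem_Icc, Set.mem_sdiff, mem_Iic, mem_Iio, not_lt]
  tauto

variable (hμ : μ (Iio 0) = 0)
include hμ

lemma quant_nonneg {t : ℝ} (ht : t < 1) : 0 ≤ quant μ t := by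
  obtain ⟨x, hx0, hx⟩ := exists_lt_cdf (μ := μ) ht
  exact le_csInf ⟨x, hx0, (cdfR_eq_cdf hμ).symm ▸ hx.le⟩ fun _ hy ↦ hy.1

lemma monotoneOn_quant : MonotoneOn (quant μ) (Iio 1) := by
  intro s _ t ht hst
  obtain ⟨x, hx0, hx⟩ := exists_lt_cdf (μ := μ) ht
  exact csInf_le_csInf ⟨0, fun _ hy ↦ hy.1⟩ ⟨x, hx0, (cdfR_eq_cdf hμ).symm ▸ hx.le⟩
    fun y hy ↦ ⟨hy.1, hst.trans hy.2⟩

lemma quant_le_iff_le_cdf {t x : ℝ} (ht : t < 1) (hx : 0 ≤ x) :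
    quant μ t ≤ x ↔ t ≤ cdf μ x := by
  have hS : quant μ t = sInf {x | 0 ≤ x ∧ t ≤ cdf μ x} := by rw [quant, cdfR_eq_cdf hμ]
  obtain ⟨y, hy0, hy⟩ := exists_lt_cdf (μ := μ) ht
  have hne : {x | 0 ≤ x ∧ t ≤ cdf μ x}.Nonempty := ⟨y, hy0, hy.le⟩
  refine ⟨fun h ↦ (monotone_cdf μ h).trans' ?_, fun h ↦ hS ▸ csInf_le ⟨0, fun _ hy ↦ hy.1⟩ ⟨hx, h⟩⟩
  refine ge_of_tendsto (((cdf μ).right_continuous _).mono Ioi_subset_Ici_self) ?_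
  filter_upwards [self_mem_nhdsWithin] with z hz
  obtain ⟨w, hw, hwz⟩ := exists_lt_of_csInf_lt hne (hS ▸ hz)
  exact hw.2.trans (monotone_cdf μ hwz.le)

theorem map_quant : (volume.restrict (Ioo (0:ℝ) 1)).map (quant μ) = μ := by
  have hmeas : AEMeasurable (quant μ) (volume.restrict (Ioo (0:ℝ) 1)) :=
    aemeasurable_restrict_of_monotoneOn measurableSet_Ioo
      ((monotoneOn_quant hμ).mono fun _ h ↦ h.2)
  refine Measure.ext_of_Iic _ _ fun x ↦ ?_
  rw [Measure.map_apply_of_aemeasurable hmeas measurableSet_Iic,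
    Measure.restrict_apply' measurableSet_Ioo]
  rcases lt_or_ge x 0 with hx | hx
  · rw [measure_mono_null (Iic_subset_Iio.2 hx) hμ]
    convert measure_empty (μ := (volume : Measure ℝ))
    exact eq_empty_of_forall_notMem fun t ht ↦ (quant_nonneg hμ ht.2.2).not_gt (ht.1.trans_lt hx)
  · have : quant μ ⁻¹' Iic x ∩ Ioo 0 1 = Ioo 0 1 ∩ Iic (cdf μ x) := by
      ext t
      simp only [mem_inter_iff, mem_preimage, mem_Iic]
      exact ⟨fun h ↦ ⟨h.2, (quant_le_iff_le_cdf hμ h.2.2 hx).1 h.1⟩,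
        fun h ↦ ⟨(quant_le_iff_le_cdf hμ h.1.2 hx).2 h.2, h.1⟩⟩
    rw [this, volume_Ioo_inter_Iic (cdf_le_one μ x), ofReal_cdf]

end Quantile

section MonotoneIntegral

variable {f g : ℝ → ℝ} {a b : ℝ}

lemma MonotoneOn.le_of_integral_eq (hf : MonotoneOn f (Ioo a b)) (hg : MonotoneOn g (Ioo a b))
    (h : ∀ x ∈ Ioo a b, ∀ y ∈ Ioo a b, ∫ t in x..y, f t = ∫ t in x..y, g t)
    {x y : ℝ} (hx : x ∈ Ioo a b) (hy : y ∈ Ioo a b) (hxy : x < y) : f x ≤ g y := by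
  have hsub : uIcc x y ⊆ Ioo a b := by
    rw [uIcc_of_le hxy.le]; exact Icc_subset_Ioo hx.1 hy.2
  have hmono : ∀ z ∈ Icc x y, f x ≤ f z ∧ g z ≤ g y := fun z hz ↦
    ⟨hf hx (hsub (uIcc_of_le hxy.le ▸ hz)) hz.1, hg (hsub (uIcc_of_le hxy.le ▸ hz)) hy hz.2⟩
  have key : (y - x) * f x ≤ (y - x) * g y :=
    calc (y - x) * f x = ∫ _ in x..y, f x := by simp
      _ ≤ ∫ t in x..y, f t := intervalIntegral.integral_mono_on hxy.le
            intervalIntegrable_const ((hf.mono hsub).intervalIntegrable) fun z hz ↦ (hmono z hz).1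
      _ = ∫ t in x..y, g t := h x hx y hy
      _ ≤ ∫ _ in x..y, g y := intervalIntegral.integral_mono_on hxy.le
            ((hg.mono hsub).intervalIntegrable) intervalIntegrable_const fun z hz ↦ (hmono z hz).2
      _ = (y - x) * g y := by simp
  exact le_of_mul_le_mul_left key (sub_pos.2 hxy)

lemma MonotoneOn.le_of_integral_eq_of_continuousWithinAt (hf : MonotoneOn f (Ioo a b))
    (hg : MonotoneOn g (Ioo a b))
    (h : ∀ x ∈ Ioo a b, ∀ y ∈ Ioo a b, ∫ t in x..y, f t = ∫ t in x..y, g t)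
    {x : ℝ} (hx : x ∈ Ioo a b) (hgx : ContinuousWithinAt g (Ioo a b) x) : f x ≤ g x := by
  refine ge_of_tendsto ((hgx.continuousAt (Ioo_mem_nhds hx.1 hx.2)).tendsto.mono_left
    (nhdsWithin_le_nhds (s := Ioi x))) ?_
  filter_upwards [Ioo_mem_nhdsGT hx.2] with y hy
  exact hf.le_of_integral_eq hg h hx ⟨hx.1.trans hy.1, hy.2⟩ hy.1

theorem MonotoneOn.ae_eq_of_integral_eq (hf : MonotoneOn f (Ioo a b))
    (hg : MonotoneOn g (Ioo a b))
    (h : ∀ x ∈ Ioo a b, ∀ y ∈ Ioo a b, ∫ t in x..y, f t = ∫ t in x..y, g t) :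
    f =ᵐ[volume.restrict (Ioo a b)] g := by
  have hE := hf.countable_not_continuousWithinAt.union hg.countable_not_continuousWithinAt
  filter_upwards [ae_restrict_mem measurableSet_Ioo, ae_restrict_of_ae (hE.ae_notMem volume)]
    with x hx hxE
  have h' : ∀ x ∈ Ioo a b, ∀ y ∈ Ioo a b, ∫ t in x..y, g t = ∫ t in x..y, f t :=
    fun x hx y hy ↦ (h x hx y hy).symm
  exact le_antisymm
    (hf.le_of_integral_eq_of_continuousWithinAt hg h hx (not_not.1 fun hc ↦ hxE (Or.inr ⟨hx, hc⟩)))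
    (hg.le_of_integral_eq_of_continuousWithinAt hf h' hx (not_not.1 fun hc ↦ hxE (Or.inl ⟨hx, hc⟩)))

end MonotoneIntegral

theorem eq_of_integral_quant_eq {μ ν : Measure ℝ} [IsProbabilityMeasure μ]
    [IsProbabilityMeasure ν] (hμ : μ (Iio 0) = 0) (hν : ν (Iio 0) = 0)
    (h : ∀ p ∈ Ioo (0:ℝ) 1, ∫ t in 0..p, quant μ t = ∫ t in 0..p, quant ν t) : μ = ν := by
  have hsub : Ioo (0:ℝ) 1 ⊆ Iio 1 := fun _ h ↦ h.2
  have hint {κ : Measure ℝ} [IsProbabilityMeasure κ] (hκ : κ (Iio 0) = 0) {p : ℝ}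
      (hp : p ∈ Ioo (0:ℝ) 1) : IntervalIntegrable (quant κ) volume 0 p := by
    refine ((monotoneOn_quant hκ).mono ?_).intervalIntegrable
    rw [uIcc_of_le hp.1.le]
    exact fun _ hx ↦ hx.2.trans_lt hp.2
  rw [← map_quant hμ, ← map_quant hν]
  refine Measure.map_congr (((monotoneOn_quant hμ).mono hsub).ae_eq_of_integral_eq
    ((monotoneOn_quant hν).mono hsub) fun x hx y hy ↦ ?_)
  rw [← intervalIntegral.integral_interval_sub_left (hint hμ hy) (hint hμ hx),
    ← intervalIntegral.integral_interval_sub_left (hint hν hy) (hint hν hx), h x hx, h y hy]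

theorem eq_of_lorenz_eq_of_mMean_eq {μ ν : Measure ℝ} (hμ : MemM μ) (hν : MemM ν)
    (hL : ∀ p ∈ Icc (0:ℝ) 1, lorenz μ p = lorenz ν p) (hm : mMean μ = mMean ν) : μ = ν := by
  obtain ⟨_, hμ0, -, hμm⟩ := hμ
  obtain ⟨_, hν0, -, -⟩ := hν
  refine eq_of_integral_quant_eq hμ0 hν0 fun p hp ↦ ?_
  have := hL p ⟨hp.1.le, hp.2.le⟩
  rwa [lorenz, lorenz, hm, div_left_inj' (hm ▸ hμm.ne')] at this

section Forward

variable {ℓ : ℝ → ℝ} {m : ℝ} (hconv : ConvexOn ℝ (Icc 0 1) ℓ) (hmin : IsMinOn ℓ (Icc 0 1) 0)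
  (hm : 0 < m)
include hconv hmin hm

lemma monotoneOn_mul_qOf : MonotoneOn (fun p ↦ m * qOf ℓ p) (Ico 0 1) :=
  fun _ hs _ ht hst ↦ mul_le_mul_of_nonneg_left (monotoneOn_qOf hconv hmin hs ht hst) hm.le

lemma mul_qOf_nonneg {p : ℝ} (hp : p ∈ Ico (0:ℝ) 1) : 0 ≤ m * qOf ℓ p :=
  mul_nonneg hm.le (qOf_nonneg hconv hmin hp)

lemma aemeasurable_mul_qOf :
    AEMeasurable (fun p ↦ m * qOf ℓ p) (volume.restrict (Ico 0 1)) :=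
  aemeasurable_restrict_of_monotoneOn measurableSet_Ico (monotoneOn_mul_qOf hconv hmin hm)

lemma isProbabilityMeasure_muOf : IsProbabilityMeasure (muOf ℓ m) :=
  isProbabilityMeasure_map_restrict_Ico (monotoneOn_mul_qOf hconv hmin hm)

lemma muOf_Iio_zero : muOf ℓ m (Iio 0) = 0 :=
  map_restrict_Ico_Iio_zero (monotoneOn_mul_qOf hconv hmin hm) fun _ ↦ mul_qOf_nonneg hconv hmin hm

lemma integrable_id_muOf : Integrable id (muOf ℓ m) := by
  rw [muOf, integrable_map_measure aestronglyMeasurable_id (aemeasurable_mul_qOf hconv hmin hm)]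
  refine (integrableOn_Ico_iff_integrableOn_Ioo).2 (Integrable.const_mul ?_ m)
  exact (intervalIntegrable_iff_integrableOn_Ioo_of_le zero_le_one).1
    (intervalIntegrable_qOf hconv hmin)

lemma mMean_muOf (hcont : ContinuousOn ℓ (Icc 0 1)) : mMean (muOf ℓ m) = m * (ℓ 1 - ℓ 0) := by
  rw [mMean, muOf, integral_map (aemeasurable_mul_qOf hconv hmin hm) (f := fun x ↦ x)
    aestronglyMeasurable_id, integral_const_mul, integral_Ico_eq_integral_Ioo,
    ← integral_Ioc_eq_integral_Ioo, ← intervalIntegral.integral_of_le zero_le_one,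
    integral_qOf hconv hmin hcont le_rfl zero_le_one le_rfl]

lemma quant_muOf {t : ℝ} (ht : t ∈ Ioo (0:ℝ) 1) (hc : ContinuousAt (qOf ℓ) t) :
    quant (muOf ℓ m) t = m * qOf ℓ t :=
  quant_map_restrict_Ico (monotoneOn_mul_qOf hconv hmin hm) (fun _ ↦ mul_qOf_nonneg hconv hmin hm)
    ht (continuousAt_const.mul hc).continuousWithinAt

lemma lorenz_muOf (hcont : ContinuousOn ℓ (Icc 0 1)) {p : ℝ} (hp : p ∈ Icc (0:ℝ) 1) :
    lorenz (muOf ℓ m) p = (ℓ p - ℓ 0) / (ℓ 1 - ℓ 0) := by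
  have hE := (countable_not_continuousAt_qOf hconv hmin).union (countable_singleton 1)
  have hQ : ∫ t in 0..p, quant (muOf ℓ m) t = ∫ t in 0..p, m * qOf ℓ t := by
    refine intervalIntegral.integral_congr_ae ?_
    filter_upwards [hE.ae_notMem volume] with t htE ht
    rw [uIoc_of_le hp.1] at ht
    have ht' : t ∈ Ioo (0:ℝ) 1 := ⟨ht.1, (ht.2.trans hp.2).lt_of_ne fun h ↦ htE (Or.inr h)⟩
    exact quant_muOf hconv hmin hm ht' (not_not.1 fun h ↦ htE (Or.inl ⟨ht', h⟩))
  rw [lorenz, hQ, intervalIntegral.integral_const_mul,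
    integral_qOf hconv hmin hcont le_rfl hp.1 hp.2,
    mMean_muOf hconv hmin hm hcont, mul_div_mul_left _ _ hm.ne']

end Forward

/-- For `ℓ` continuous convex on `[0,1]` with values in `[0,1]`,
`ℓ(0)=0`, `ℓ(1)=1`, and `m>0`, the pushforward `μ` of Lebesgue measure on `[0,1)` by
`p ↦ m·∂₋ℓ(p)` belongs to `𝐌`, has mean `m` and Lorenz function `ℓ`; consequently
`μ ↦ (L_μ, m_μ)` is a bijection from `𝐌` onto `𝔏 × (0,∞)`. -/
theorem lorenz_mean_bijective (ℓ : ℝ → ℝ) (m : ℝ)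
    (hcont : ContinuousOn ℓ (Set.Icc 0 1))
    (hconv : ConvexOn ℝ (Set.Icc 0 1) ℓ)
    (hmaps : Set.MapsTo ℓ (Set.Icc 0 1) (Set.Icc 0 1))
    (h0 : ℓ 0 = 0) (h1 : ℓ 1 = 1) (hm : 0 < m) :
    (MemM (muOf ℓ m) ∧ mMean (muOf ℓ m) = m ∧
      ∀ p ∈ Set.Icc (0:ℝ) 1, lorenz (muOf ℓ m) p = ℓ p) ∧
    (∀ μ ν : Measure ℝ, MemM μ → MemM ν →
      (∀ p ∈ Set.Icc (0:ℝ) 1, lorenz μ p = lorenz ν p) → mMean μ = mMean ν → μ = ν) := by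
  have hmin : IsMinOn ℓ (Icc 0 1) 0 := fun x hx ↦ by simpa [h0] using (hmaps hx).1
  have hmean : mMean (muOf ℓ m) = m := by
    rw [mMean_muOf hconv hmin hm hcont, h0, h1, sub_zero, mul_one]
  refine ⟨⟨⟨isProbabilityMeasure_muOf hconv hmin hm, muOf_Iio_zero hconv hmin hm,
    integrable_id_muOf hconv hmin hm, hmean.symm ▸ hm⟩, hmean, fun p hp ↦ ?_⟩,
    fun μ ν ↦ eq_of_lorenz_eq_of_mMean_eq⟩
  rw [lorenz_muOf hconv hmin hm hcont hp, h0, h1, sub_zero, sub_zero, div_one]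
end

section
/- Let μ ∈ 𝐌 and ℓ ∈ ℕ with ℓ ≥ 1, and let μ̃_ℓ := (1/ℓ) ∑_{k=0}^{ℓ−1} δ_{Q_μ(k/ℓ)} be the ℓ-quantile approximation of μ (where δ_x is the Dirac mass at x). Then for all x ∈ ℝ₊, F_μ(x) ≤ F_{μ̃_ℓ}(x) ≤ F_μ(x) + 1/ℓ. -/
open MeasureTheory Filter Topology

/-- The `ℓ`-quantile approximation of `μ`: `(1/ℓ) ∑_{k=0}^{ℓ-1} δ_{Q_μ(k/ℓ)}`. -/
noncomputable def quantApprox (μ : Measure ℝ) (ℓ : ℕ) : Measure ℝ :=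
  ((ℓ : ENNReal)⁻¹) • ∑ k ∈ Finset.range ℓ, Measure.dirac (quant μ ((k : ℝ) / (ℓ : ℝ)))

/-!
Let `F = F_μ(x)`. The quantile function is a lower Galois adjoint of the right-continuous
c.d.f.: for `p < 1` and `x ≥ 0`, `Q_μ(p) ≤ x ↔ p ≤ F`. Hence `ℓ F_{μ̃_ℓ}(x)` counts the
`k < ℓ` with `k ≤ ℓ F`, which is `min ℓ (⌊ℓ F⌋ + 1)`, a number between `ℓ F` and `ℓ F + 1`.
-/

open ProbabilityTheory Finset

lemma StieltjesFunction.le_apply_of_forall_gt (f : StieltjesFunction ℝ) {p x : ℝ}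
    (h : ∀ y, x < y → p ≤ f y) : p ≤ f x :=
  ge_of_tendsto ((f.right_continuous x).mono Set.Ioi_subset_Ici_self)
    (eventually_nhdsWithin_of_forall h)

lemma card_filter_natCast_le_eq_min (n : ℕ) {t : ℝ} (ht : 0 ≤ t) :
    #{k ∈ range n | ((k : ℕ) : ℝ) ≤ t} = min n (⌊t⌋₊ + 1) := by
  rw [← card_range (min n _)]
  congr 1
  ext k
  simp [Nat.le_floor_iff ht]

lemma cdfR_smul (c : ENNReal) (ν : Measure ℝ) (x : ℝ) :
    cdfR (c • ν) x = c.toReal * cdfR ν x := by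
  rw [cdfR, cdfR, Measure.smul_apply, smul_eq_mul, ENNReal.toReal_mul]

lemma cdfR_sum_dirac {ι : Type*} (s : Finset ι) {a : ι → ℝ} (ha : ∀ i, 0 ≤ a i) (x : ℝ) :
    cdfR (∑ i ∈ s, Measure.dirac (a i)) x = #{i ∈ s | a i ≤ x} := by
  classical
  simp [cdfR, Measure.finsetSum_apply, Measure.dirac_apply' _ measurableSet_Icc, Set.indicator, ha]

lemma cdfR_eq_cdf_s17 {μ : Measure ℝ} [IsProbabilityMeasure μ] (hneg : μ (Set.Iio 0) = 0) :
    cdfR μ = cdf μ := by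
  ext x
  rw [cdfR, cdf_eq_real, measureReal_def, ← Set.Iic_inter_Ici,
    measure_inter_conull (by rwa [Set.compl_Ici])]

lemma quant_nonneg_s17 (μ : Measure ℝ) (p : ℝ) : 0 ≤ quant μ p :=
  Real.sInf_nonneg fun _ hx ↦ hx.1

lemma quant_le_iff {μ : Measure ℝ} [IsProbabilityMeasure μ] (hneg : μ (Set.Iio 0) = 0)
    {p x : ℝ} (hp : p < 1) (hx : 0 ≤ x) : quant μ p ≤ x ↔ p ≤ cdfR μ x := by
  rw [quant, cdfR_eq_cdf_s17 hneg]
  refine ⟨fun h ↦ (cdf μ).le_apply_of_forall_gt fun y hy ↦ ?_,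
    fun h ↦ csInf_le ⟨0, fun _ h ↦ h.1⟩ ⟨hx, h⟩⟩
  have hne : {x : ℝ | 0 ≤ x ∧ p ≤ cdf μ x}.Nonempty :=
    ((eventually_ge_atTop 0).and ((tendsto_cdf_atTop μ).eventually (eventually_ge_nhds hp))).exists
  obtain ⟨s, ⟨-, hps⟩, hsy⟩ := exists_lt_of_csInf_lt hne (h.trans_lt hy)
  exact hps.trans ((cdf μ).mono hsy.le)

lemma cdfR_quantApprox {μ : Measure ℝ} [IsProbabilityMeasure μ] (hneg : μ (Set.Iio 0) = 0)
    {ℓ : ℕ} (hℓ : 0 < ℓ) {x : ℝ} (hx : 0 ≤ x) :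
    cdfR (quantApprox μ ℓ) x = min ℓ (⌊ℓ * cdfR μ x⌋₊ + 1) / ℓ := by
  have hℓ' : (0 : ℝ) < ℓ := Nat.cast_pos.mpr hℓ
  have hcount : #{k ∈ range ℓ | quant μ ((k : ℕ) / ℓ) ≤ x} =
      #{k ∈ range ℓ | ((k : ℕ) : ℝ) ≤ ℓ * cdfR μ x} := by
    refine congrArg _ (filter_congr fun k hk ↦ ?_)
    have hkℓ : (k : ℝ) / ℓ < 1 := (div_lt_one hℓ').mpr (by exact_mod_cast mem_range.mp hk)
    rw [quant_le_iff hneg hkℓ hx, div_le_iff₀' hℓ']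
  rw [quantApprox, cdfR_smul, cdfR_sum_dirac _ (fun _ ↦ quant_nonneg_s17 _ _), hcount,
    card_filter_natCast_le_eq_min (t := ℓ * cdfR μ x) _
      (mul_nonneg hℓ'.le ENNReal.toReal_nonneg), ENNReal.toReal_inv, ENNReal.toReal_natCast,
    inv_mul_eq_div]

/-- For `μ ∈ 𝐌` and `ℓ ≥ 1`, the c.d.f. of the `ℓ`-quantile
approximation satisfies `F_μ(x) ≤ F_{μ̃_ℓ}(x) ≤ F_μ(x) + 1/ℓ` for all `x ∈ ℝ₊`. -/
theorem cdf_quantApprox_bounds (μ : Measure ℝ) (hμ : MemM μ) (ℓ : ℕ) (hℓ : 1 ≤ ℓ) :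
    ∀ x : ℝ, 0 ≤ x →
      cdfR μ x ≤ cdfR (quantApprox μ ℓ) x ∧
      cdfR (quantApprox μ ℓ) x ≤ cdfR μ x + 1 / (ℓ : ℝ) := by
  intro x hx
  obtain ⟨hprob, hneg, -, -⟩ := hμ
  have hℓ' : (0 : ℝ) < ℓ := by exact_mod_cast hℓ
  rw [cdfR_quantApprox hneg hℓ hx, cdfR_eq_cdf_s17 hneg, le_div_iff₀ hℓ', div_le_iff₀ hℓ',
    Nat.cast_min]
  have hF : cdf μ x ≤ 1 := cdf_le_one μ x
  have hℓF : (0 : ℝ) ≤ ℓ * cdf μ x := mul_nonneg hℓ'.le (cdf_nonneg μ x)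
  push_cast
  constructor
  · exact le_min (by nlinarith) (by linarith [Nat.lt_floor_add_one (ℓ * cdf μ x)])
  · calc min (ℓ : ℝ) (⌊ℓ * cdf μ x⌋₊ + 1)
        ≤ ⌊ℓ * cdf μ x⌋₊ + 1 := min_le_right _ _
      _ ≤ ℓ * cdf μ x + 1 := by linarith [Nat.floor_le hℓF]
      _ = (cdf μ x + 1 / ℓ) * ℓ := by field_simp
end
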